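/- Let X_m be a real N×m matrix, σ > 0 with ‖X_m w‖ ≥ σ‖w‖ for all w ∈ ℝ^m, and X_mᵀX_m invertible. Let u ∈ ℝ^N, write X_m† = (X_mᵀX_m)⁻¹X_mᵀ, set d = ‖u‖² − uᵀ X_m X_m† u, assume d > 0, set c = 1/d, and let X = [X_m, u]. Let Ẑ be the (m+1)×N matrix whose first m rows are X_m† and whose last row is zero. Then ‖(XᵀX)⁻¹Xᵀ − Ẑ‖₂ ≤ c·‖u‖·√(1 + ‖u‖²/σ²). -/

import Mathlib

/-!
Write `y = X_m† u` and let `w = u - X_m y` be the residual of `u`, which is orthogonal to the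
columns of `X_m`, so that `d = wᵀu = ‖w‖²`. The candidate `M = Ẑ + d⁻¹ [-y; 1] wᵀ` satisfies
`M [X_m, u] = 1` and `[X_m, u] M = X_m X_m† + d⁻¹ w wᵀ` is symmetric; these two properties force
`M = (XᵀX)⁻¹Xᵀ`. The difference is therefore the rank-one matrix `d⁻¹ [-y; 1] wᵀ` of operator norm
`d⁻¹ ‖[-y; 1]‖ ‖w‖`. By Pythagoras `‖w‖ ≤ ‖u‖` and `‖X_m y‖ ≤ ‖u‖`, and the singular value bound
turns the latter into `‖y‖ ≤ ‖u‖ / σ`.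
-/

open scoped Matrix Matrix.Norms.L2Operator

/-- Append a column `u` to an `N × m` matrix, yielding an `N × (m+1)` matrix. -/
def appendCol {N m : ℕ} (X : Matrix (Fin N) (Fin m) ℝ) (u : Fin N → ℝ) :
    Matrix (Fin N) (Fin (m + 1)) ℝ :=
  Matrix.of fun i => Fin.snoc (X i) (u i)

/-- Append a row `z` to an `m × N` matrix, yielding an `(m+1) × N` matrix. -/
def appendRow {N m : ℕ} (Z : Matrix (Fin m) (Fin N) ℝ) (z : Fin N → ℝ) :
    Matrix (Fin (m + 1)) (Fin N) ℝ :=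
  Matrix.of (Fin.snoc Z z)

open Matrix

namespace Matrix

section LeftPinv

variable {R : Type*} [CommRing R] {n k : Type*} [Fintype n] [Fintype k] [DecidableEq k]

/-- The paper's `X†`; it is the Moore–Penrose pseudoinverse when `XᵀX` is invertible. -/
noncomputable def leftPinv (X : Matrix n k R) : Matrix k n R := (Xᵀ * X)⁻¹ * Xᵀ

theorem leftPinv_mul_self {X : Matrix n k R} (hX : IsUnit (Xᵀ * X).det) :
    X.leftPinv * X = 1 := by
  rw [leftPinv, Matrix.mul_assoc, nonsing_inv_mul _ hX]

theorem transpose_mul_leftPinv (X : Matrix n k R) : (X * X.leftPinv)ᵀ = X * X.leftPinv := by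
  rw [leftPinv, transpose_mul, transpose_mul, transpose_nonsing_inv, transpose_mul,
    transpose_transpose, Matrix.mul_assoc]

theorem transpose_mulVec_sub_mulVec_leftPinv {X : Matrix n k R} (hX : IsUnit (Xᵀ * X).det)
    (u : n → R) : Xᵀ *ᵥ (u - X *ᵥ (X.leftPinv *ᵥ u)) = 0 := by
  rw [mulVec_sub, mulVec_mulVec, mulVec_mulVec, leftPinv, ← Matrix.mul_assoc,
    mul_nonsing_inv _ hX, Matrix.one_mul, sub_self]

theorem leftPinv_eq_of_mul_eq_one {X : Matrix n k R} {M : Matrix k n R} (hMX : M * X = 1)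
    (hXM : (X * M)ᵀ = X * M) : X.leftPinv = M := by
  have hMX' : Mᵀ * Xᵀ = X * M := by rw [← transpose_mul, hXM]
  have hinv : (Xᵀ * X)⁻¹ = M * Mᵀ := inv_eq_left_inv <| by
    calc M * Mᵀ * (Xᵀ * X) = M * (Mᵀ * Xᵀ) * X := by simp only [Matrix.mul_assoc]
      _ = (M * X) * (M * X) := by rw [hMX']; simp only [Matrix.mul_assoc]
      _ = 1 := by rw [hMX, Matrix.one_mul]
  calc X.leftPinv = M * (Mᵀ * Xᵀ) := by rw [leftPinv, hinv, Matrix.mul_assoc]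
    _ = M * X * M := by rw [hMX', Matrix.mul_assoc]
    _ = M := by rw [hMX, Matrix.one_mul]

end LeftPinv

end Matrix

section Blocks

variable {N m k : ℕ}

@[simp]
theorem appendRow_last (Z : Matrix (Fin m) (Fin N) ℝ) (z : Fin N → ℝ) :
    appendRow Z z (Fin.last m) = z :=
  Fin.snoc_last (α := fun _ => Fin N → ℝ) _ _

@[simp]
theorem appendRow_castSucc (Z : Matrix (Fin m) (Fin N) ℝ) (z : Fin N → ℝ) (i : Fin m) :
    appendRow Z z i.castSucc = Z i :=
  Fin.snoc_castSucc (α := fun _ => Fin N → ℝ) _ _ _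

@[simp]
theorem appendCol_apply_last (X : Matrix (Fin N) (Fin m) ℝ) (u : Fin N → ℝ) (i : Fin N) :
    appendCol X u i (Fin.last m) = u i :=
  Fin.snoc_last (α := fun _ => ℝ) _ _

@[simp]
theorem appendCol_apply_castSucc (X : Matrix (Fin N) (Fin m) ℝ) (u : Fin N → ℝ) (i : Fin N)
    (j : Fin m) : appendCol X u i j.castSucc = X i j :=
  Fin.snoc_castSucc (α := fun _ => ℝ) _ _ _

theorem appendRow_mul (Z : Matrix (Fin m) (Fin N) ℝ) (z : Fin N → ℝ)
    (W : Matrix (Fin N) (Fin k) ℝ) : appendRow Z z * W = appendRow (Z * W) (z ᵥ* W) := by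
  ext a b
  induction a using Fin.lastCases <;> simp [mul_apply, vecMul, dotProduct]

theorem mul_appendCol (W : Matrix (Fin k) (Fin N) ℝ) (X : Matrix (Fin N) (Fin m) ℝ)
    (u : Fin N → ℝ) : W * appendCol X u = appendCol (W * X) (W *ᵥ u) := by
  ext a b
  induction b using Fin.lastCases <;> simp [mul_apply, mulVec, dotProduct]

theorem vecMul_appendCol (w : Fin N → ℝ) (X : Matrix (Fin N) (Fin m) ℝ) (u : Fin N → ℝ) :
    w ᵥ* appendCol X u = Fin.snoc (w ᵥ* X) (w ⬝ᵥ u) := by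
  ext b
  induction b using Fin.lastCases <;> simp [vecMul, dotProduct]

theorem appendCol_mulVec_snoc (X : Matrix (Fin N) (Fin m) ℝ) (u : Fin N → ℝ) (y : Fin m → ℝ)
    (a : ℝ) : appendCol X u *ᵥ Fin.snoc y a = X *ᵥ y + a • u := by
  ext i
  simp [mulVec, dotProduct, Fin.sum_univ_castSucc, mul_comm]

theorem appendCol_mul_appendRow (X : Matrix (Fin N) (Fin m) ℝ) (u : Fin N → ℝ)
    (Z : Matrix (Fin m) (Fin N) ℝ) (z : Fin N → ℝ) :
    appendCol X u * appendRow Z z = X * Z + vecMulVec u z := by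
  ext i j
  simp [mul_apply, vecMulVec_apply, Fin.sum_univ_castSucc]

theorem appendRow_appendCol_one_add_vecMulVec (y : Fin m → ℝ) {d : ℝ} (hd : d ≠ 0) :
    appendRow (appendCol (1 : Matrix (Fin m) (Fin m) ℝ) y) 0 +
      d⁻¹ • vecMulVec (Fin.snoc (-y) 1) (Fin.snoc 0 d) = 1 := by
  ext a b
  induction a using Fin.lastCases <;> induction b using Fin.lastCases <;>
    simp [vecMulVec_apply, one_apply, hd, Fin.castSucc_ne_last, (Fin.castSucc_ne_last _).symm,
      mul_comm (y _)]

theorem leftPinv_appendCol (X : Matrix (Fin N) (Fin m) ℝ) (hX : IsUnit (Xᵀ * X).det)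
    (u : Fin N → ℝ) {y : Fin m → ℝ} {w : Fin N → ℝ} (hy : y = X.leftPinv *ᵥ u)
    (hw : w = u - X *ᵥ y) (hwu : w ⬝ᵥ u ≠ 0) :
    (appendCol X u).leftPinv =
      appendRow X.leftPinv 0 + (w ⬝ᵥ u)⁻¹ • vecMulVec (Fin.snoc (-y) 1) w := by
  have hwX : w ᵥ* X = 0 := by
    rw [← mulVec_transpose, hw, hy, transpose_mulVec_sub_mulVec_leftPinv hX]
  have hXv : appendCol X u *ᵥ Fin.snoc (-y) 1 = w := by
    rw [appendCol_mulVec_snoc, hw, mulVec_neg, one_smul, neg_add_eq_sub]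
  apply leftPinv_eq_of_mul_eq_one
  · rw [Matrix.add_mul, Matrix.smul_mul, appendRow_mul, mul_appendCol, leftPinv_mul_self hX,
      ← hy, zero_vecMul, vecMulVec_mul, vecMul_appendCol, hwX]
    exact appendRow_appendCol_one_add_vecMulVec y hwu
  · rw [Matrix.mul_add, Matrix.mul_smul, appendCol_mul_appendRow, mul_vecMulVec, hXv,
      vecMulVec_zero, add_zero, transpose_add, transpose_smul, transpose_mul_leftPinv,
      transpose_vecMulVec]

end Blocks

theorem Matrix.l2_opNorm_vecMulVec {𝕜 : Type*} [RCLike 𝕜] {m n : Type*} [Fintype m] [Fintype n]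
    [DecidableEq n] (x : m → 𝕜) (y : n → 𝕜) :
    ‖vecMulVec x y‖ = ‖WithLp.toLp 2 x‖ * ‖WithLp.toLp 2 y‖ := by
  have h := InnerProductSpace.symm_toEuclideanLin_rankOne (WithLp.toLp 2 x) (WithLp.toLp 2 (star y))
  rw [WithLp.ofLp_toLp, WithLp.ofLp_toLp, star_star] at h
  have hstar : ‖WithLp.toLp 2 (star y)‖ = ‖WithLp.toLp 2 y‖ := by simp [EuclideanSpace.norm_eq]
  rw [← h, l2_opNorm_def, LinearEquiv.trans_apply, LinearEquiv.apply_symm_apply, ← hstar,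
    ← InnerProductSpace.norm_rankOne (𝕜 := 𝕜)]
  rfl

theorem EuclideanSpace.norm_toLp_snoc_sq {m : ℕ} (x : Fin m → ℝ) (a : ℝ) :
    ‖WithLp.toLp 2 (Fin.snoc x a : Fin (m + 1) → ℝ)‖ ^ 2 = ‖WithLp.toLp 2 x‖ ^ 2 + a ^ 2 := by
  simp [EuclideanSpace.norm_sq_eq, Fin.sum_univ_castSucc]

theorem EuclideanSpace.norm_toLp_snoc_neg_one_le {m : ℕ} {y : Fin m → ℝ} {σ r : ℝ} (hσ : 0 < σ)
    (hy : σ * ‖WithLp.toLp 2 y‖ ≤ r) :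
    ‖WithLp.toLp 2 (Fin.snoc (-y) 1 : Fin (m + 1) → ℝ)‖ ≤ √(1 + r ^ 2 / σ ^ 2) := by
  rw [Real.le_sqrt (norm_nonneg _) (by positivity), norm_toLp_snoc_sq, WithLp.toLp_neg, norm_neg,
    one_pow, add_comm, add_le_add_iff_left, le_div_iff₀ (by positivity)]
  nlinarith [mul_pow σ ‖WithLp.toLp 2 y‖ 2, pow_le_pow_left₀ (by positivity) hy 2]

theorem Matrix.norm_toLp_mulVec_add_sq {n k : Type*} [Fintype n] [Fintype k] (A : Matrix n k ℝ)
    (y : k → ℝ) (w : n → ℝ) (h : Aᵀ *ᵥ w = 0) :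
    ‖WithLp.toLp 2 (A *ᵥ y + w)‖ ^ 2 = ‖WithLp.toLp 2 (A *ᵥ y)‖ ^ 2 + ‖WithLp.toLp 2 w‖ ^ 2 := by
  have horth : inner ℝ (WithLp.toLp 2 (A *ᵥ y)) (WithLp.toLp 2 w) = 0 := by
    rw [EuclideanSpace.inner_toLp_toLp, star_trivial, dotProduct_mulVec, ← mulVec_transpose, h,
      zero_dotProduct]
  rw [WithLp.toLp_add, sq, sq, sq, norm_add_sq_eq_norm_sq_add_norm_sq_real horth]

/-- Pseudoinverse perturbation estimate in the proof of Proposition 5.5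
(operator norm perturbation under column deletion). -/
theorem pseudoinverse_perturbation {N m : ℕ} (Xm : Matrix (Fin N) (Fin m) ℝ)
    (σ : ℝ) (hσ : 0 < σ)
    (hXmσ : ∀ w : EuclideanSpace ℝ (Fin m),
      σ * ‖w‖ ≤ ‖(EuclideanSpace.equiv (Fin N) ℝ).symm (Xm *ᵥ w)‖)
    (hinv : IsUnit (Xmᵀ * Xm).det)
    (u : EuclideanSpace ℝ (Fin N))
    (d : ℝ) (hd : d = ‖u‖ ^ 2 - u ⬝ᵥ ((Xm * ((Xmᵀ * Xm)⁻¹ * Xmᵀ)) *ᵥ u))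
    (hd0 : 0 < d) (c : ℝ) (hc : c = 1 / d) :
    ‖((appendCol Xm u)ᵀ * appendCol Xm u)⁻¹ * (appendCol Xm u)ᵀ -
        appendRow ((Xmᵀ * Xm)⁻¹ * Xmᵀ) 0‖ ≤
      c * ‖u‖ * Real.sqrt (1 + ‖u‖ ^ 2 / σ ^ 2) := by
  set y := Xm.leftPinv *ᵥ u.ofLp
  set w := u.ofLp - Xm *ᵥ y with hw
  have hXw : Xmᵀ *ᵥ w = 0 := transpose_mulVec_sub_mulVec_leftPinv hinv u.ofLp
  have hwu : w ⬝ᵥ u.ofLp = d := by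
    rw [hd, hw, sub_dotProduct, ← real_inner_self_eq_norm_sq, ← mulVec_mulVec,
      dotProduct_comm (Xm *ᵥ y)]
    rfl
  have hpyth : ‖u‖ ^ 2 = ‖WithLp.toLp 2 (Xm *ᵥ y)‖ ^ 2 + ‖WithLp.toLp 2 w‖ ^ 2 := by
    rw [← norm_toLp_mulVec_add_sq Xm y w hXw, hw, add_sub_cancel]
  have hw_le : ‖WithLp.toLp 2 w‖ ≤ ‖u‖ := by
    nlinarith [norm_nonneg (WithLp.toLp 2 w), norm_nonneg u]
  have hXy_le : ‖WithLp.toLp 2 (Xm *ᵥ y)‖ ≤ ‖u‖ := by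
    nlinarith [norm_nonneg (WithLp.toLp 2 (Xm *ᵥ y)), norm_nonneg u]
  have hy_le : σ * ‖WithLp.toLp 2 y‖ ≤ ‖u‖ := (hXmσ (WithLp.toLp 2 y)).trans hXy_le
  have hc0 : 0 ≤ c := by rw [hc]; positivity
  change ‖(appendCol Xm u).leftPinv - appendRow Xm.leftPinv 0‖ ≤ _
  rw [leftPinv_appendCol Xm hinv u.ofLp rfl rfl (hwu ▸ hd0.ne'), add_sub_cancel_left, norm_smul,
    l2_opNorm_vecMulVec, hwu, ← one_div, ← hc, Real.norm_of_nonneg hc0]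
  calc c * (‖WithLp.toLp 2 (Fin.snoc (-y) 1 : Fin (m + 1) → ℝ)‖ * ‖WithLp.toLp 2 w‖)
      ≤ c * (√(1 + ‖u‖ ^ 2 / σ ^ 2) * ‖u‖) := by
        gcongr
        exact EuclideanSpace.norm_toLp_snoc_neg_one_le hσ hy_le
    _ = c * ‖u‖ * √(1 + ‖u‖ ^ 2 / σ ^ 2) := by ring
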